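/- There exist a 6-stage explicit Runge–Kutta tableau (A, b, c) with c = (0, 1/4, 1/2, 3/4, 3/10, 1) satisfying Φ(t_{12}) + Φ(t_{15}) = 1/30 + 1/40 = 7/120 but with Φ(t_{12}) ≠ 1/30, where Φ(t_{12}) = ∑ b_i c_i a_{ij} a_{jk} c_k and Φ(t_{15}) = ∑ b_i a_{ij} c_j a_{jk} c_k. -/

import Mathlib

/-!
For this tableau Φ(t₁₂) = 13/480 and Φ(t₁₅) = 15/480, while the order conditions ask for
16/480 and 12/480: the two errors cancel in the sum. Both weights factor through matrix–vector
products, Φ(t₁₂) = b ⬝ (c ⊙ A(Ac)) and Φ(t₁₅) = b ⬝ A(c ⊙ Ac), so the computation reduces to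
the three vectors Ac, A(Ac) and A(c ⊙ Ac).
-/

open Matrix

section ElementaryWeights

variable {ι R : Type*} [Fintype ι] [CommSemiring R]

def elementaryWeightT12 (A : Matrix ι ι R) (b c : ι → R) : R :=
  ∑ i, ∑ j, ∑ k, b i * c i * A i j * A j k * c k

def elementaryWeightT15 (A : Matrix ι ι R) (b c : ι → R) : R :=
  ∑ i, ∑ j, ∑ k, b i * A i j * c j * A j k * c k

theorem elementaryWeightT12_eq_dotProduct (A : Matrix ι ι R) (b c : ι → R) :
    elementaryWeightT12 A b c = b ⬝ᵥ (c * (A *ᵥ (A *ᵥ c))) := by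
  simp only [elementaryWeightT12, dotProduct, mulVec, Pi.mul_apply, Finset.mul_sum, mul_assoc]

theorem elementaryWeightT15_eq_dotProduct (A : Matrix ι ι R) (b c : ι → R) :
    elementaryWeightT15 A b c = b ⬝ᵥ (A *ᵥ (c * (A *ᵥ c))) := by
  simp only [elementaryWeightT15, dotProduct, mulVec, Pi.mul_apply, Finset.mul_sum, mul_assoc]

end ElementaryWeights

noncomputable section

def tableauA : Matrix (Fin 6) (Fin 6) ℝ :=
  !![0, 0, 0, 0, 0, 0;
     1/4, 0, 0, 0, 0, 0;
     -1/2, 1, 0, 0, 0, 0;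
     3/16, 0, 9/16, 0, 0, 0;
     291/2500, 108/625, 63/2500, -9/625, 0, 0;
     -146/135, 152/15, -7/15, 428/405, -700/81, 0]

def tableauB : Fin 6 → ℝ := ![5/54, 0, 0, 32/81, 250/567, 1/14]

def tableauC : Fin 6 → ℝ := ![0, 1/4, 1/2, 3/4, 3/10, 1]

end

theorem tableauA_eq_zero_of_le : ∀ i j : Fin 6, i ≤ j → tableauA i j = 0 := by
  intro i j hij
  fin_cases i <;> fin_cases j <;> first | rfl | simp at hij

theorem tableauA_mulVec_tableauC :
    tableauA *ᵥ tableauC = ![0, 0, 1/4, 9/32, 9/200, 1/2] := by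
  ext i; fin_cases i <;> norm_num [tableauA, tableauC, mulVec, dotProduct, Fin.sum_univ_succ]

theorem tableauA_mulVec_tableauA_mulVec_tableauC :
    tableauA *ᵥ (tableauA *ᵥ tableauC) = ![0, 0, 0, 9/64, 9/4000, -5/24] := by
  rw [tableauA_mulVec_tableauC]
  ext i; fin_cases i <;> norm_num [tableauA, mulVec, dotProduct, Fin.sum_univ_succ]

theorem tableauA_mulVec_tableauC_mul_tableauA_mulVec_tableauC :
    tableauA *ᵥ (tableauC * (tableauA *ᵥ tableauC)) = ![0, 0, 0, 9/128, 9/80000, 23/480] := by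
  rw [tableauA_mulVec_tableauC]
  ext i; fin_cases i <;> norm_num [tableauA, tableauC, mulVec, dotProduct, Fin.sum_univ_succ]

theorem elementaryWeightT12_tableau :
    elementaryWeightT12 tableauA tableauB tableauC = 13/480 := by
  rw [elementaryWeightT12_eq_dotProduct, tableauA_mulVec_tableauA_mulVec_tableauC]
  norm_num [tableauB, tableauC, dotProduct, Fin.sum_univ_succ]

theorem elementaryWeightT15_tableau :
    elementaryWeightT15 tableauA tableauB tableauC = 1/32 := by
  rw [elementaryWeightT15_eq_dotProduct, tableauA_mulVec_tableauC_mul_tableauA_mulVec_tableauC]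
  norm_num [tableauB, dotProduct, Fin.sum_univ_succ]

theorem exists_ambiguous_order_five_tableau :
    ∃ (A : Matrix (Fin 6) (Fin 6) ℝ) (b c : Fin 6 → ℝ),
      c = ![0, 1/4, 1/2, 3/4, 3/10, 1] ∧
      (∀ i j : Fin 6, i ≤ j → A i j = 0) ∧
      (∑ i, ∑ j, ∑ k, b i * c i * A i j * A j k * c k) +
        (∑ i, ∑ j, ∑ k, b i * A i j * c j * A j k * c k) = 1/30 + 1/40 ∧
      (1/30 + 1/40 : ℝ) = 7/120 ∧
      (∑ i, ∑ j, ∑ k, b i * c i * A i j * A j k * c k) ≠ 1/30 := by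
  have h12 := elementaryWeightT12_tableau
  have h15 := elementaryWeightT15_tableau
  unfold elementaryWeightT12 at h12
  unfold elementaryWeightT15 at h15
  refine ⟨tableauA, tableauB, tableauC, rfl, tableauA_eq_zero_of_le, ?_, by norm_num, ?_⟩
  · rw [h12, h15]; norm_num
  · rw [h12]; norm_num
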